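/- There is a bijection between the set of k-dimensional unique sink orientations and the set of subsets K ⊆ {0,1,2,3}^k of size 2^k in which every two distinct elements differ by exactly 2 in some coordinate. -/
import Mathlib


/-- The Szabó–Welzl condition: `O` is a unique sink orientation of the `k`-cube. -/
def IsUSO {k : ℕ} (O : (Fin k → Bool) → (Fin k → Bool)) : Prop :=
  ∀ v w : Fin k → Bool, v ≠ w → ∃ i : Fin k, v i ≠ w i ∧ O v i = O w i

/-- `K ⊆ {0,1,2,3}^k` describes a `4ℤ^k`-periodic cube tiling: it has `2^k`
elements and any two distinct elements differ by exactly 2 in some coordinate. -/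
def IsTiling {k : ℕ} (K : Finset (Fin k → Fin 4)) : Prop :=
  K.card = 2 ^ k ∧ ∀ v ∈ K, ∀ w ∈ K, v ≠ w →
    ∃ i : Fin k, (v i : ℕ) = (w i : ℕ) + 2 ∨ (w i : ℕ) = (v i : ℕ) + 2

def enc (b c : Bool) : Fin 4 := ⟨2 * b.toNat + c.toNat, by cases b <;> cases c <;> decide⟩
def hi (a : Fin 4) : Bool := decide (2 ≤ a.val)
def lo (a : Fin 4) : Bool := decide (a.val % 2 = 1)

lemma hi_enc (b c : Bool) : hi (enc b c) = b := by cases b <;> cases c <;> rfl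
lemma lo_enc (b c : Bool) : lo (enc b c) = c := by cases b <;> cases c <;> rfl
lemma enc_hi_lo (a : Fin 4) : enc (hi a) (lo a) = a := by fin_cases a <;> rfl
lemma enc_diff {b b' : Bool} (c : Bool) (h : b ≠ b') :
    (enc b c).val = (enc b' c).val + 2 ∨ (enc b' c).val = (enc b c).val + 2 := by
  cases b <;> cases b' <;> cases c <;> revert h <;> decide
lemma hi_ne {a b : Fin 4} (h : a.val = b.val + 2 ∨ b.val = a.val + 2) : hi a ≠ hi b := by
  revert h; fin_cases a <;> fin_cases b <;> decide
lemma lo_eq {a b : Fin 4} (h : a.val = b.val + 2 ∨ b.val = a.val + 2) : lo a = lo b := by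
  revert h; fin_cases a <;> fin_cases b <;> decide

def fmap {k : ℕ} (O : (Fin k → Bool) → (Fin k → Bool)) (v : Fin k → Bool) :
    Fin k → Fin 4 := fun i => enc (v i) (O v i)

lemma fmap_inj {k : ℕ} (O : (Fin k → Bool) → (Fin k → Bool)) :
    Function.Injective (fmap O) := by
  intro v w h
  funext i
  have := congrArg hi (congrFun h i)
  simpa [fmap, hi_enc] using this

lemma card_bool_fun (k : ℕ) : Fintype.card (Fin k → Bool) = 2 ^ k := by simp

lemma tiling_fmap {k : ℕ} (O : (Fin k → Bool) → (Fin k → Bool)) (hO : IsUSO O) :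
    IsTiling (Finset.univ.image (fmap O)) := by
  constructor
  · rw [Finset.card_image_of_injective _ (fmap_inj O), Finset.card_univ, card_bool_fun]
  · intro u hu w hw huw
    obtain ⟨v, -, rfl⟩ := Finset.mem_image.mp hu
    obtain ⟨v', -, rfl⟩ := Finset.mem_image.mp hw
    have hvv' : v ≠ v' := fun h => huw (by rw [h])
    obtain ⟨i, hne, heq⟩ := hO v v' hvv'
    exact ⟨i, by simpa [fmap, heq] using enc_diff (O v' i) hne⟩

/-- There is a bijection between `k`-dimensional USOs and `4ℤ^k`-periodic cube tilings. -/
theorem stmt2 (k : ℕ) :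
    Nonempty ({O : (Fin k → Bool) → (Fin k → Bool) // IsUSO O} ≃
      {K : Finset (Fin k → Fin 4) // IsTiling K}) := by
  refine ⟨Equiv.ofBijective
    (fun O => ⟨Finset.univ.image (fmap O.1), tiling_fmap O.1 O.2⟩) ⟨?_, ?_⟩⟩
  · -- injectivity
    rintro ⟨O, hO⟩ ⟨O', hO'⟩ h
    have h' : Finset.univ.image (fmap O) = Finset.univ.image (fmap O') :=
      congrArg Subtype.val h
    apply Subtype.ext
    funext v
    have hv : fmap O v ∈ Finset.univ.image (fmap O') := by
      rw [← h']; exact Finset.mem_image_of_mem _ (Finset.mem_univ v)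
    obtain ⟨w, -, hw⟩ := Finset.mem_image.mp hv
    have hwv : w = v := by
      funext i
      have := congrArg hi (congrFun hw i)
      simpa [fmap, hi_enc] using this
    subst hwv
    funext i
    have := congrArg lo (congrFun hw i)
    simpa [fmap, lo_enc] using this.symm
  · -- surjectivity
    rintro ⟨K, hcard, htile⟩
    set g : (Fin k → Fin 4) → (Fin k → Bool) := fun u i => hi (u i) with hg
    have ginj : Set.InjOn g K := by
      intro u hu w hw h
      by_contra hne
      obtain ⟨i, hi2⟩ := htile u hu w hw hne
      exact hi_ne hi2 (congrFun h i)
    have himg : K.image g = Finset.univ := by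
      apply Finset.eq_univ_of_card
      rw [Finset.card_image_of_injOn ginj, hcard, card_bool_fun]
    have hex : ∀ v : Fin k → Bool, ∃ u ∈ K, g u = v := by
      intro v
      have : v ∈ K.image g := himg ▸ Finset.mem_univ v
      simpa using Finset.mem_image.mp this
    choose pick hpickK hpickg using hex
    set O : (Fin k → Bool) → (Fin k → Bool) := fun v i => lo (pick v i) with hOdef
    have hfo : ∀ v, fmap O v = pick v := by
      intro v
      funext i
      have : v i = hi (pick v i) := (congrFun (hpickg v) i).symm
      simp only [fmap, hOdef, this, enc_hi_lo]
    have hUSO : IsUSO O := by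
      intro v w hvw
      have hpne : pick v ≠ pick w := by
        intro h
        exact hvw (by rw [← hpickg v, ← hpickg w, h])
      obtain ⟨i, hi2⟩ := htile _ (hpickK v) _ (hpickK w) hpne
      refine ⟨i, ?_, lo_eq hi2⟩
      have h1 : v i = hi (pick v i) := (congrFun (hpickg v) i).symm
      have h2 : w i = hi (pick w i) := (congrFun (hpickg w) i).symm
      rw [h1, h2]
      exact hi_ne hi2
    refine ⟨⟨O, hUSO⟩, ?_⟩
    apply Subtype.ext
    show Finset.univ.image (fmap O) = K
    apply Finset.eq_of_subset_of_card_le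
    · intro u hu
      obtain ⟨v, -, rfl⟩ := Finset.mem_image.mp hu
      rw [hfo v]; exact hpickK v
    · rw [hcard, Finset.card_image_of_injective _ (fmap_inj O), Finset.card_univ, card_bool_fun]
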